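/- arXiv:1804.07021 — 3 statements merged into one kernel-verified Lean document; each statement's English description precedes it below -/
import Mathlib

section
/- Let R_n be the kernel of the mod-n winding number map on F_{s-1}. As a module over ℤ[ℤ/nℤ], where the generator σ of ℤ/nℤ acts by conjugation by x_1, the abelianization R_n/R_n' is isomorphic to ℤ[ℤ/nℤ]^{s-2} ⊕ ℤ, with the free summands generated by β_j = x_j x_1^{-1} (2 ≤ j ≤ s-1) and the trivial summand generated by x_1^n. -/
/-!
Write `x = x_{i₀}`, `ε` for the exponent sum and `M = ℤ[ℤ/n]^{ι ∖ {i₀}}`, on which `m ∈ ℤ` acts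
by `σ^m`. The map `x_i ↦ (e_i, 1)` (with `e_{i₀} = 0`) into `M ⋊ ℤ` restricts on `R_n`, where
`ε ∈ nℤ` acts trivially, to a homomorphism; together with `ε / n` it gives
`Φ = abelToProd : R_nᵃᵇ → M × ℤ`. The inverse `Ψ = prodToAbel` sends `σ^k e_j` to the class
of `x^k β_j x^{-k}` and `(0, 1)` to the class of `x^n`. `Φ ∘ Ψ = id` is checked on generators.
For `Ψ ∘ Φ = id`, the homomorphism `w ↦ ([w x^{-ε w}], ε w)` from the free group to
`R_nᵃᵇ ⋊ ℤ` agrees on generators with `Ψ ⋊ id` composed with the map into `M ⋊ ℤ`, so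
`Ψ (Φ a) = [a x^{-ε a}] + (ε a / n) [x^n]`, which is `[a]`.
-/

open Multiplicative

namespace Subgroup

variable {G : Type*} [Group G] (H : Subgroup G) [H.Normal]

def conjAbelianization : G →* MulAut (Abelianization H) :=
  MonoidHom.mk' (fun g => (MulAut.conjNormal g).abelianizationCongr) fun g h => by
    rw [map_mul]
    exact (abelianizationCongr_trans _ _).symm

lemma conjAbelianization_of (g : G) (a : H) :
    H.conjAbelianization g (Abelianization.of a) = Abelianization.of (MulAut.conjNormal g a) :=
  rfl

lemma conjAbelianization_coe_eq_one (a : H) : H.conjAbelianization a = 1 := by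
  ext x
  induction x using QuotientGroup.induction_on with
  | H b =>
  show H.conjAbelianization a (Abelianization.of b) = Abelianization.of b
  rw [conjAbelianization_of, show MulAut.conjNormal (a : G) b = a * b * a⁻¹ from rfl]
  simp

end Subgroup

def Module.unitsMulAut (S M : Type*) [Ring S] [AddCommGroup M] [Module S M] :
    Sˣ →* MulAut (Multiplicative M) :=
  MonoidHom.mk' (fun u => AddEquiv.toMultiplicative (DistribMulAction.toAddEquiv M u))
    fun u v => by ext; simp [mul_smul]

namespace FreeGroup

variable {ι : Type*}

def winding : FreeGroup ι →* Multiplicative ℤ := FreeGroup.lift fun _ => ofAdd 1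

@[simp] lemma winding_of (i : ι) : winding (of i) = ofAdd 1 := lift_apply_of

def windingMod (n : ℕ) : FreeGroup ι →* Multiplicative (ZMod n) :=
  (Int.castAddHom (ZMod n)).toMultiplicative.comp winding

lemma eq_windingMod {n : ℕ} {α : FreeGroup ι →* Multiplicative (ZMod n)}
    (hα : ∀ i, α (of i) = ofAdd 1) : α = windingMod n :=
  ext_hom _ _ fun i => by simp [hα, windingMod]

lemma mem_ker_windingMod {n : ℕ} {w : FreeGroup ι} :
    w ∈ (windingMod n).ker ↔ (n : ℤ) ∣ (winding w).toAdd := by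
  rw [MonoidHom.mem_ker, ← ZMod.intCast_zmod_eq_zero_iff_dvd]
  rfl

end FreeGroup

namespace WindingKernel

open FreeGroup (of winding windingMod winding_of mem_ker_windingMod)
open SemidirectProduct

variable {ι : Type*} (n : ℕ) (i₀ : ι)

section Action

abbrev FreeMod : Type _ := {j : ι // j ≠ i₀} → MonoidAlgebra ℤ (Multiplicative (ZMod n))

noncomputable def sigmaAut : Multiplicative ℤ →* MulAut (Multiplicative (FreeMod n i₀)) :=
  (Module.unitsMulAut _ _).comp
    ((MonoidAlgebra.of ℤ _).toHomUnits.comp (Int.castAddHom (ZMod n)).toMultiplicative)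

@[simp] lemma toAdd_sigmaAut (m : ℤ) (v : Multiplicative (FreeMod n i₀)) :
    (sigmaAut n i₀ (ofAdd m) v).toAdd =
      MonoidAlgebra.single (ofAdd (m : ZMod n)) (1 : ℤ) • v.toAdd :=
  rfl

lemma sigmaAut_eq_one {m : ℤ} (h : (n : ℤ) ∣ m) : sigmaAut n i₀ (ofAdd m) = 1 := by
  ext v : 1
  apply toAdd.injective
  rw [toAdd_sigmaAut, (ZMod.intCast_zmod_eq_zero_iff_dvd m n).2 h, ofAdd_zero,
    ← MonoidAlgebra.one_def, one_smul]
  rfl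

variable (ι) in
abbrev windingKer : Subgroup (FreeGroup ι) := (windingMod n).ker

lemma winding_dvd (a : windingKer ι n) : (n : ℤ) ∣ (winding (a : FreeGroup ι)).toAdd :=
  mem_ker_windingMod.1 a.2

def basePow : windingKer ι n :=
  ⟨of i₀ ^ n, mem_ker_windingMod.2 (by simp)⟩

@[simp] lemma coe_basePow : (basePow n i₀ : FreeGroup ι) = of i₀ ^ n :=
  rfl

def beta (j : {j : ι // j ≠ i₀}) : windingKer ι n :=
  ⟨of j.1 * (of i₀)⁻¹, mem_ker_windingMod.2 (by simp)⟩

@[simp] lemma coe_beta (j : {j : ι // j ≠ i₀}) : (beta n i₀ j : FreeGroup ι) = of j.1 * (of i₀)⁻¹ :=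
  rfl

noncomputable def conjBase : Multiplicative ℤ →* MulAut (Abelianization (windingKer ι n)) :=
  (Subgroup.conjAbelianization _).comp (zpowersHom _ (of i₀))

lemma conjBase_of (m : Multiplicative ℤ) (a : windingKer ι n) :
    conjBase n i₀ m (.of a) = .of (MulAut.conjNormal (of i₀ ^ m.toAdd) a) :=
  rfl

noncomputable def conjBaseMod :
    Multiplicative (ZMod n) →* MulAut (Abelianization (windingKer ι n)) :=
  MonoidHom.toAdditiveRight.symm <| ZMod.lift n ⟨MonoidHom.toAdditiveRight (conjBase n i₀), by
    show conjBase n i₀ (ofAdd (n : ℤ)) = 1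
    rw [conjBase, MonoidHom.comp_apply, zpowersHom_apply, toAdd_ofAdd, zpow_natCast]
    exact Subgroup.conjAbelianization_coe_eq_one _ (basePow n i₀)⟩

lemma conjBaseMod_intCast (m : ℤ) :
    conjBaseMod n i₀ (ofAdd (m : ZMod n)) = conjBase n i₀ (ofAdd m) :=
  congrArg Additive.toMul (ZMod.lift_coe n _ m)

lemma mul_zpow_neg_winding_mem (w : FreeGroup ι) :
    w * of i₀ ^ (-(winding w).toAdd) ∈ windingKer ι n :=
  mem_ker_windingMod.2 (by simp)

noncomputable def toAbelSemidirect :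
    FreeGroup ι →* Abelianization (windingKer ι n) ⋊[conjBase n i₀] Multiplicative ℤ where
  toFun w := ⟨.of ⟨w * of i₀ ^ (-(winding w).toAdd), mul_zpow_neg_winding_mem n i₀ w⟩, winding w⟩
  map_one' := by ext <;> simp; rfl
  map_mul' v w := by
    ext
    · rw [mul_left, conjBase_of, ← map_mul]
      refine congrArg Abelianization.of (Subtype.ext ?_)
      simp only [map_mul, toAdd_mul, MulAut.conjNormal_apply, Subgroup.coe_mul]
      group
    · simp

end Action

section Forward

variable [DecidableEq ι]

noncomputable def gen (i : ι) : FreeMod n i₀ := if h : i = i₀ then 0 else Pi.single ⟨i, h⟩ 1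

noncomputable def toSemidirect :
    FreeGroup ι →* Multiplicative (FreeMod n i₀) ⋊[sigmaAut n i₀] Multiplicative ℤ :=
  FreeGroup.lift fun i => ⟨ofAdd (gen n i₀ i), ofAdd 1⟩

lemma toSemidirect_of (i : ι) : toSemidirect n i₀ (of i) = ⟨ofAdd (gen n i₀ i), ofAdd 1⟩ :=
  FreeGroup.lift_apply_of

lemma toSemidirect_right (w : FreeGroup ι) : (toSemidirect n i₀ w).right = winding w := by
  rw [← rightHom_eq_right, ← MonoidHom.comp_apply]
  exact DFunLike.congr_fun (FreeGroup.ext_hom _ _ fun i => by simp [toSemidirect]) w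

lemma toSemidirect_zpow_base (m : ℤ) : toSemidirect n i₀ (of i₀ ^ m) = inr (ofAdd m) := by
  have : toSemidirect n i₀ (of i₀) = inr (ofAdd 1) := by simp [toSemidirect, gen]
  rw [map_zpow, this, ← map_zpow, ← ofAdd_zsmul, smul_eq_mul, mul_one]

lemma toSemidirect_beta (j : {j : ι // j ≠ i₀}) :
    toSemidirect n i₀ (beta n i₀ j) = inl (ofAdd (Pi.single j 1)) := by
  rw [coe_beta, ← zpow_neg_one, map_mul, toSemidirect_zpow_base]
  ext
  · simp [toSemidirect, gen, j.2]
  · simp [toSemidirect]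

noncomputable def kerToProd : windingKer ι n →* Multiplicative (FreeMod n i₀ × ℤ) where
  toFun a := ofAdd ((toSemidirect n i₀ a).left.toAdd, (winding (a : FreeGroup ι)).toAdd / n)
  map_one' := by simp
  map_mul' a b := by
    have hleft : (toSemidirect n i₀ (a * b : FreeGroup ι)).left =
        (toSemidirect n i₀ a).left * (toSemidirect n i₀ b).left := by
      rw [map_mul, mul_left, toSemidirect_right, ← ofAdd_toAdd (winding _),
        sigmaAut_eq_one n i₀ (winding_dvd n a)]
      rfl
    rw [← ofAdd_add, Prod.mk_add_mk, ← toAdd_mul, ← hleft,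
      ← Int.add_ediv_of_dvd_left (winding_dvd n a), ← toAdd_mul, ← map_mul]
    rfl

noncomputable def abelToProd : Additive (Abelianization (windingKer ι n)) →+ FreeMod n i₀ × ℤ :=
  MonoidHom.toAdditiveLeft (Abelianization.lift (kerToProd n i₀))

lemma abelToProd_of (a : windingKer ι n) :
    abelToProd n i₀ (.ofMul (.of a)) =
      ((toSemidirect n i₀ a).left.toAdd, (winding (a : FreeGroup ι)).toAdd / n) :=
  rfl

lemma abelToProd_conjBase (m : ℤ) (a : windingKer ι n) :
    abelToProd n i₀ (.ofMul (conjBase n i₀ (ofAdd m) (.of a))) =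
      (MonoidAlgebra.single (ofAdd (m : ZMod n)) (1 : ℤ) • (abelToProd n i₀ (.ofMul (.of a))).1,
        (abelToProd n i₀ (.ofMul (.of a))).2) := by
  rw [conjBase_of, abelToProd_of, abelToProd_of, MulAut.conjNormal_apply]
  simp [toSemidirect_zpow_base, mul_left, inv_left]

lemma abelToProd_conjNormal_base (a : windingKer ι n) :
    abelToProd n i₀ (.ofMul (.of (MulAut.conjNormal (of i₀) a))) =
      (MonoidAlgebra.single (ofAdd (1 : ZMod n)) (1 : ℤ) • (abelToProd n i₀ (.ofMul (.of a))).1,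
        (abelToProd n i₀ (.ofMul (.of a))).2) := by
  simpa [conjBase_of] using abelToProd_conjBase n i₀ 1 a

lemma abelToProd_beta (j : {j : ι // j ≠ i₀}) :
    abelToProd n i₀ (.ofMul (.of (beta n i₀ j))) = (Pi.single j 1, 0) := by
  rw [abelToProd_of, toSemidirect_beta]
  simp

lemma abelToProd_basePow [NeZero n] :
    abelToProd n i₀ (.ofMul (.of (basePow n i₀))) = (0, 1) := by
  rw [abelToProd_of, coe_basePow, ← zpow_natCast, toSemidirect_zpow_base]
  simp [NeZero.ne n]

end Forward

section Inverse

variable [DecidableEq ι] [Fintype ι]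

noncomputable def modToAbel : FreeMod n i₀ →ₗ[ℤ] Additive (Abelianization (windingKer ι n)) :=
  (Pi.basis fun _ => MonoidAlgebra.basis _ ℤ).constr ℤ fun jg =>
    .ofMul (conjBaseMod n i₀ jg.2 (.of (beta n i₀ jg.1)))

lemma modToAbel_single (j : {j : ι // j ≠ i₀}) (g : Multiplicative (ZMod n)) :
    modToAbel n i₀ (Pi.single j (MonoidAlgebra.single g 1)) =
      .ofMul (conjBaseMod n i₀ g (.of (beta n i₀ j))) := by
  have h := (Pi.basis fun _ : {j : ι // j ≠ i₀} =>
    MonoidAlgebra.basis (Multiplicative (ZMod n)) ℤ).constr_basis ℤ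
    (fun jg => Additive.ofMul (conjBaseMod n i₀ jg.2 (.of (beta n i₀ jg.1)))) ⟨j, g⟩
  rw [Pi.basis_apply, MonoidAlgebra.basis_apply] at h
  exact h

lemma modToAbel_single_smul (m : ℤ) (v : FreeMod n i₀) :
    modToAbel n i₀ (MonoidAlgebra.single (ofAdd (m : ZMod n)) (1 : ℤ) • v) =
      .ofMul (conjBase n i₀ (ofAdd m) (modToAbel n i₀ v).toMul) := by
  suffices (modToAbel n i₀).toAddMonoidHom.comp
      (DistribSMul.toAddMonoidHom _ (MonoidAlgebra.single (ofAdd (m : ZMod n)) (1 : ℤ))) =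
      (MulEquiv.toAdditive (conjBase n i₀ (ofAdd m))).toAddMonoidHom.comp
        (modToAbel n i₀).toAddMonoidHom from DFunLike.congr_fun this v
  ext j g
  simp only [AddMonoidHom.comp_apply, MonoidAlgebra.singleAddHom_apply,
    AddMonoidHom.single_apply, DistribSMul.toAddMonoidHom_apply, LinearMap.toAddMonoidHom_coe]
  rw [← Pi.single_smul, smul_eq_mul, MonoidAlgebra.single_mul_single, one_mul,
    modToAbel_single, modToAbel_single, map_mul, conjBaseMod_intCast]
  rfl

noncomputable def modToAbelHom :
    Multiplicative (FreeMod n i₀) →* Abelianization (windingKer ι n) :=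
  AddMonoidHom.toMultiplicativeLeft (modToAbel n i₀).toAddMonoidHom

lemma modToAbelHom_comp_sigmaAut (m : Multiplicative ℤ) :
    (modToAbelHom n i₀).comp (sigmaAut n i₀ m).toMonoidHom =
      (conjBase n i₀ m).toMonoidHom.comp (modToAbelHom n i₀) :=
  MonoidHom.ext fun v => congrArg Additive.toMul (modToAbel_single_smul n i₀ m.toAdd v.toAdd)

lemma map_comp_toSemidirect :
    (map (modToAbelHom n i₀) (.id _) (modToAbelHom_comp_sigmaAut n i₀)).comp
      (toSemidirect n i₀) = toAbelSemidirect n i₀ := by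
  refine FreeGroup.ext_hom _ _ fun i => ?_
  rw [MonoidHom.comp_apply, toSemidirect_of]
  ext
  · show (modToAbel n i₀ (gen n i₀ i)).toMul =
      .of ⟨of i * of i₀ ^ (-(winding (of i)).toAdd), mul_zpow_neg_winding_mem n i₀ _⟩
    simp only [winding_of, toAdd_ofAdd, zpow_neg_one]
    by_cases hi : i = i₀
    · subst hi
      simp only [gen, dite_true, map_zero, toMul_zero, mul_inv_cancel]
      rfl
    · rw [gen, dif_neg hi, MonoidAlgebra.one_def, modToAbel_single, map_one]
      rfl
  · rfl

lemma modToAbel_toSemidirect_left (w : FreeGroup ι) :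
    modToAbel n i₀ (toSemidirect n i₀ w).left.toAdd =
      .ofMul (.of ⟨w * of i₀ ^ (-(winding w).toAdd), mul_zpow_neg_winding_mem n i₀ w⟩) :=
  congrArg (fun p => Additive.ofMul p.left) (DFunLike.congr_fun (map_comp_toSemidirect n i₀) w)

noncomputable def prodToAbel : FreeMod n i₀ × ℤ →+ Additive (Abelianization (windingKer ι n)) :=
  (modToAbel n i₀).toAddMonoidHom.coprod (zmultiplesHom _ (.ofMul (.of (basePow n i₀))))

lemma prodToAbel_apply (v : FreeMod n i₀) (k : ℤ) :
    prodToAbel n i₀ (v, k) = modToAbel n i₀ v + k • .ofMul (.of (basePow n i₀)) :=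
  rfl

lemma prodToAbel_abelToProd (x : Additive (Abelianization (windingKer ι n))) :
    prodToAbel n i₀ (abelToProd n i₀ x) = x := by
  induction x using QuotientGroup.induction_on with
  | H a =>
  show prodToAbel n i₀ (abelToProd n i₀ (.ofMul (.of a))) = .ofMul (.of a)
  rw [abelToProd_of, prodToAbel_apply, modToAbel_toSemidirect_left, ← ofMul_zpow, ← map_zpow,
    ← ofMul_mul, ← map_mul]
  refine congrArg (Additive.ofMul ∘ Abelianization.of) (Subtype.ext ?_)
  simp only [Subgroup.coe_mul, Subgroup.coe_zpow, coe_basePow, ← zpow_natCast, ← zpow_mul,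
    Int.mul_ediv_cancel' (winding_dvd n a)]
  group

lemma abelToProd_modToAbel [NeZero n] (v : FreeMod n i₀) :
    abelToProd n i₀ (modToAbel n i₀ v) = (v, 0) := by
  suffices (abelToProd n i₀).comp (modToAbel n i₀).toAddMonoidHom = .inl _ _ from
    DFunLike.congr_fun this v
  ext j g : 3
  obtain ⟨k, rfl⟩ : ∃ k : ℤ, ofAdd (k : ZMod n) = g := ⟨(g.toAdd.cast : ℤ), by simp⟩
  simp only [AddMonoidHom.comp_apply, MonoidAlgebra.singleAddHom_apply, AddMonoidHom.single_apply,
    LinearMap.toAddMonoidHom_coe, AddMonoidHom.inl_apply]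
  rw [modToAbel_single, conjBaseMod_intCast, abelToProd_conjBase, abelToProd_beta,
    ← Pi.single_smul, smul_eq_mul, mul_one]

lemma abelToProd_prodToAbel [NeZero n] (p : FreeMod n i₀ × ℤ) :
    abelToProd n i₀ (prodToAbel n i₀ p) = p := by
  obtain ⟨v, k⟩ := p
  rw [prodToAbel_apply, map_add, map_zsmul, abelToProd_modToAbel, abelToProd_basePow]
  simp

noncomputable def abelEquiv [NeZero n] :
    Additive (Abelianization (windingKer ι n)) ≃+ FreeMod n i₀ × ℤ :=
  { abelToProd n i₀ with
    invFun := prodToAbel n i₀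
    left_inv := prodToAbel_abelToProd n i₀
    right_inv := abelToProd_prodToAbel n i₀ }

end Inverse

end WindingKernel

/-- As a `ℤ[ℤ/nℤ]`-module (the generator `σ` of `ℤ/nℤ` acting by conjugation by
`x₁`), the abelianization `R_n/R_n'` is isomorphic to `ℤ[ℤ/nℤ]^{s-2} ⊕ ℤ`, with the free
summands generated by `β_j = x_j x₁⁻¹` (`2 ≤ j ≤ s-1`) and the trivial summand generated by
`x₁^n`.  This is expressed by an additive isomorphism intertwining conjugation by `x₁` with
multiplication by `σ` on each group-ring component (and the identity on the `ℤ` component),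
sending the class of `β_j` to the `j`-th standard basis vector and the class of `x₁^n` to
`(0,1)`. -/
theorem stmt_4 (s n : ℕ) (hs : 3 ≤ s) (hn : 1 ≤ n)
    (αn : FreeGroup (Fin (s-1)) →* Multiplicative (ZMod n))
    (hα : ∀ i, αn (FreeGroup.of i) = Multiplicative.ofAdd 1)
    (β : {j : Fin (s-1) // j ≠ ⟨0, by omega⟩} → αn.ker)
    (hβ : ∀ j, (β j : FreeGroup (Fin (s-1))) =
      FreeGroup.of j.1 * (FreeGroup.of (⟨0, by omega⟩ : Fin (s-1)))⁻¹)
    (ξ : αn.ker)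
    (hξ : (ξ : FreeGroup (Fin (s-1))) = FreeGroup.of (⟨0, by omega⟩ : Fin (s-1)) ^ n) :
    ∃ e : Additive (Abelianization αn.ker) ≃+
        (({j : Fin (s-1) // j ≠ ⟨0, by omega⟩} → MonoidAlgebra ℤ (Multiplicative (ZMod n))) × ℤ),
      (∀ a : αn.ker,
        e (Additive.ofMul (Abelianization.of
            (⟨FreeGroup.of (⟨0, by omega⟩ : Fin (s-1)) * ↑a *
                (FreeGroup.of (⟨0, by omega⟩ : Fin (s-1)))⁻¹,
              (MonoidHom.normal_ker αn).conj_mem ↑a a.2 _⟩ : αn.ker))) =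
          ((fun j => MonoidAlgebra.single (Multiplicative.ofAdd (1 : ZMod n)) (1:ℤ) *
              (e (Additive.ofMul (Abelianization.of a))).1 j),
            (e (Additive.ofMul (Abelianization.of a))).2)) ∧
      (∀ j, e (Additive.ofMul (Abelianization.of (β j))) = (Pi.single j 1, 0)) ∧
      e (Additive.ofMul (Abelianization.of ξ)) = (0, 1) := by
  have : NeZero n := ⟨by omega⟩
  obtain rfl := FreeGroup.eq_windingMod hα
  obtain rfl : β = WindingKernel.beta n _ := funext fun j => Subtype.ext (hβ j)
  obtain rfl : ξ = WindingKernel.basePow n _ := Subtype.ext hξ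
  refine ⟨WindingKernel.abelEquiv n _, fun a => ?_, WindingKernel.abelToProd_beta n _,
    WindingKernel.abelToProd_basePow n _⟩
  exact WindingKernel.abelToProd_conjNormal_base n _ a
end

section
/- The Artin action of the braid generator σ_1 on the free group F_{s-1} (σ_1: x_1 ↦ x_1 x_2 x_1^{-1}, x_2 ↦ x_1, x_j ↦ x_j for j > 2) preserves the kernel R_0 of the winding number map, and its induced action on R_0/R_0' commutes with the action of t (conjugation by x_1): for every a ∈ R_0, σ_1(x_1 a x_1^{-1}) ≡ x_1 σ_1(a) x_1^{-1} modulo R_0'. -/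
open scoped commutatorElement

/-!
Since `σ₁` permutes the generators up to conjugation, it preserves the winding number `α`, hence
maps `R₀ = ker α` into itself. For `a ∈ R₀`, `σ₁(x₁ a x₁⁻¹)` is the conjugate of `σ₁ a` by
`σ₁ x₁`, and `σ₁ x₁` lies in the same coset of `R₀` as `x₁`; conjugations by two elements of the
same coset of a normal subgroup `N` differ on `N` by a commutator of elements of `N`.
-/

section

variable {G : Type*} [Group G]

theorem Subgroup.conj_mul_inv_conj_mem_commutator {N : Subgroup G} [N.Normal] {g h b : G}
    (hgh : g * h⁻¹ ∈ N) (hb : b ∈ N) :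
    g * b * g⁻¹ * (h * b * h⁻¹)⁻¹ ∈ ⁅N, N⁆ := by
  have hcomm : g * b * g⁻¹ * (h * b * h⁻¹)⁻¹ = ⁅g * h⁻¹, h * b * h⁻¹⁆ := by group
  rw [hcomm]
  exact Subgroup.commutator_mem_commutator hgh (‹N.Normal›.conj_mem b hb h)

variable {A : Type*} [Group A]

theorem MonoidHom.map_mem_ker_of_comp_eq {α : G →* A} {σ : G →* G} (hσ : α.comp σ = α)
    {a : G} (ha : a ∈ α.ker) : σ a ∈ α.ker := by
  rwa [MonoidHom.mem_ker, ← MonoidHom.comp_apply, hσ]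

theorem MonoidHom.map_conj_mul_inv_conj_map_mem_commutator_ker {α : G →* A} {σ : G →* G}
    (hσ : α.comp σ = α) (g : G) {a : G} (ha : a ∈ α.ker) :
    σ (g * a * g⁻¹) * (g * σ a * g⁻¹)⁻¹ ∈ ⁅α.ker, α.ker⁆ := by
  have hg : σ g * g⁻¹ ∈ α.ker := by
    rw [MonoidHom.mem_ker, map_mul, map_inv, ← MonoidHom.comp_apply, hσ, mul_inv_cancel]
  rw [map_mul, map_mul, map_inv]
  exact Subgroup.conj_mul_inv_conj_mem_commutator hg (map_mem_ker_of_comp_eq hσ ha)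

end

/-- The Artin action of the braid generator `σ₁` on the free group `F_{s-1}`
(`σ₁ : x₁ ↦ x₁x₂x₁⁻¹, x₂ ↦ x₁, x_j ↦ x_j` for `j > 2`; here `x₁ = of ⟨0,_⟩`, `x₂ = of ⟨1,_⟩`)
preserves the kernel `R₀` of the winding number map, and its induced action on `R₀/R₀'`
commutes with the action of `t` (conjugation by `x₁`): for every `a ∈ R₀`,
`σ₁(x₁ a x₁⁻¹) · (x₁ σ₁(a) x₁⁻¹)⁻¹ ∈ R₀'`. -/
theorem stmt_8 (s : ℕ) (hs : 3 ≤ s)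
    (α : FreeGroup (Fin (s-1)) →* Multiplicative ℤ)
    (hα : ∀ i, α (FreeGroup.of i) = Multiplicative.ofAdd 1)
    (σ₁ : FreeGroup (Fin (s-1)) →* FreeGroup (Fin (s-1)))
    (h1 : σ₁ (FreeGroup.of (⟨0, by omega⟩ : Fin (s-1))) =
      FreeGroup.of (⟨0, by omega⟩ : Fin (s-1)) * FreeGroup.of (⟨1, by omega⟩ : Fin (s-1)) *
        (FreeGroup.of (⟨0, by omega⟩ : Fin (s-1)))⁻¹)
    (h2 : σ₁ (FreeGroup.of (⟨1, by omega⟩ : Fin (s-1))) =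
      FreeGroup.of (⟨0, by omega⟩ : Fin (s-1)))
    (h3 : ∀ j : Fin (s-1), j ≠ ⟨0, by omega⟩ → j ≠ ⟨1, by omega⟩ →
      σ₁ (FreeGroup.of j) = FreeGroup.of j) :
    (∀ a ∈ α.ker, σ₁ a ∈ α.ker) ∧
    ∀ a ∈ α.ker,
      σ₁ (FreeGroup.of (⟨0, by omega⟩ : Fin (s-1)) * a *
          (FreeGroup.of (⟨0, by omega⟩ : Fin (s-1)))⁻¹) *
        (FreeGroup.of (⟨0, by omega⟩ : Fin (s-1)) * σ₁ a *
          (FreeGroup.of (⟨0, by omega⟩ : Fin (s-1)))⁻¹)⁻¹ ∈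
        Subgroup.map α.ker.subtype (commutator ↥α.ker) := by
  have hσ₁ : α.comp σ₁ = α := by
    refine FreeGroup.ext_hom _ _ fun j => ?_
    rw [MonoidHom.comp_apply]
    by_cases hj0 : j = ⟨0, by omega⟩
    · rw [hj0, h1, map_mul, map_mul, map_inv, hα, hα, mul_inv_cancel_comm]
    by_cases hj1 : j = ⟨1, by omega⟩
    · rw [hj1, h2, hα, hα]
    · rw [h3 j hj0 hj1]
  refine ⟨fun a ha => MonoidHom.map_mem_ker_of_comp_eq hσ₁ ha, fun a ha => ?_⟩
  rw [Subgroup.map_subtype_commutator]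
  exact MonoidHom.map_conj_mul_inv_conj_map_mem_commutator_ker hσ₁ _ ha
end

section
/- Let α = Σ_{ν≥0} a_ν ℓ^ν ∈ ℤ_ℓ with digits 0 ≤ a_ν < ℓ, and let A_n = 1 + t + t^2 + ··· + t^{c_n - 1} where c_n = Σ_{ν=0}^n a_ν ℓ^ν, regarded as elements of the completed group algebra ℤ_ℓ[[ℤ_ℓ]] = lim_n ℤ_ℓ[ℤ/ℓ^n ℤ]. Then the sequence (A_n) is Cauchy and converges in ℤ_ℓ[[ℤ_ℓ]]. -/
/-!
In `ℤ_ℓ[ℤ/ℓ^m]` the sum `1 + t + ⋯ + t^(s-1)` depends on `s` only through `s % ℓ^m` and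
`s / ℓ^m`: it is the same sum up to `s % ℓ^m` plus `s / ℓ^m` copies of the norm element
`N = ∑ₓ t^x`. Since `c_{n₂} ≡ c_{n₁} (mod ℓ^(n₁+1))` for `n₁ ≤ n₂`, the remainder `c_n % ℓ^m` is
constant for `n ≥ m`, so `A_n = v + (c_n / ℓ^m) • N` with the quotients `c_n / ℓ^m` forming an
`ℓ`-adically Cauchy sequence; it converges in the complete ring `ℤ_ℓ`, and so does `A_n`.
-/

open Finset

namespace ZMod

variable {M : Type*} [AddCommMonoid M] {q : ℕ} [NeZero q]

theorem sum_range_natCast (f : ZMod q → M) : ∑ i ∈ range q, f i = ∑ x, f x :=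
  sum_nbij' (fun i => (i : ZMod q)) val (fun _ _ => mem_univ _)
    (fun x _ => mem_range.2 x.val_lt) (fun _ hi => val_cast_of_lt (mem_range.1 hi))
    (fun x _ => natCast_zmod_val x) (fun _ _ => rfl)

theorem sum_range_natCast_add (f : ZMod q → M) (s : ℕ) :
    ∑ i ∈ range q, f ((s + i : ℕ) : ZMod q) = ∑ x, f x := by
  push_cast
  rw [sum_range_natCast (fun x : ZMod q => f (s + x))]
  exact Equiv.sum_comp (Equiv.addLeft (s : ZMod q)) f

theorem sum_range_add_mul (f : ZMod q → M) (s j : ℕ) :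
    ∑ i ∈ range (s + q * j), f i = ∑ i ∈ range s, f i + j • ∑ x, f x := by
  induction j with
  | zero => simp
  | succ j ih =>
    rw [mul_add_one, ← add_assoc, sum_range_add, ih, sum_range_natCast_add, succ_nsmul,
      add_assoc]

theorem sum_range_eq_mod_add_div (f : ZMod q → M) (n : ℕ) :
    ∑ i ∈ range n, f i = ∑ i ∈ range (n % q), f i + (n / q) • ∑ x, f x := by
  conv_lhs => rw [← Nat.mod_add_div n q]
  exact sum_range_add_mul f _ _

end ZMod

theorem exists_sum_range_mul_pow_eq_add (f : ℕ → ℕ) (p : ℕ) {m n : ℕ} (h : m ≤ n) :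
    ∃ r, ∑ ν ∈ range n, f ν * p ^ ν = ∑ ν ∈ range m, f ν * p ^ ν + p ^ m * r := by
  rw [← sum_range_add_sum_Ico _ h]
  obtain ⟨r, hr⟩ : p ^ m ∣ ∑ ν ∈ Ico m n, f ν * p ^ ν :=
    dvd_sum fun ν hν => dvd_mul_of_dvd_right (pow_dvd_pow p (mem_Ico.1 hν).1) _
  exact ⟨r, by rw [hr]⟩

section PadicConvergence

variable (p : ℕ) [Fact p.Prime] {M : Type*} [AddCommGroup M] [Module ℤ_[p] M]

def IsPadicCauchy (u : ℕ → M) : Prop :=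
  ∀ k : ℕ, ∃ N, ∀ n₁ n₂, N ≤ n₁ → N ≤ n₂ → ∃ B, u n₁ - u n₂ = ((p : ℤ_[p]) ^ k) • B

def IsPadicLimit (u : ℕ → M) (L : M) : Prop :=
  ∀ k : ℕ, ∃ N, ∀ n, N ≤ n → ∃ B, u n - L = ((p : ℤ_[p]) ^ k) • B

variable {p}

theorem IsPadicCauchy.of_eq_add_smul {u : ℕ → M} {x : ℕ → ℤ_[p]} {v w : M} {n₀ : ℕ}
    (hu : ∀ n, n₀ ≤ n → u n = v + x n • w) (hx : IsPadicCauchy p x) : IsPadicCauchy p u := by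
  intro k
  obtain ⟨N, hN⟩ := hx k
  refine ⟨max N n₀, fun n₁ n₂ h₁ h₂ => ?_⟩
  obtain ⟨B, hB⟩ := hN n₁ n₂ (le_of_max_le_left h₁) (le_of_max_le_left h₂)
  refine ⟨B • w, ?_⟩
  rw [hu n₁ (le_of_max_le_right h₁), hu n₂ (le_of_max_le_right h₂), add_sub_add_left_eq_sub,
    ← sub_smul, hB, smul_assoc]

theorem IsPadicLimit.of_eq_add_smul {u : ℕ → M} {x : ℕ → ℤ_[p]} {y : ℤ_[p]} {v w : M} {n₀ : ℕ}
    (hu : ∀ n, n₀ ≤ n → u n = v + x n • w) (hx : IsPadicLimit p x y) :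
    IsPadicLimit p u (v + y • w) := by
  intro k
  obtain ⟨N, hN⟩ := hx k
  refine ⟨max N n₀, fun n hn => ?_⟩
  obtain ⟨B, hB⟩ := hN n (le_of_max_le_left hn)
  refine ⟨B • w, ?_⟩
  rw [hu n (le_of_max_le_right hn), add_sub_add_left_eq_sub, ← sub_smul, hB, smul_assoc]

theorem PadicInt.norm_le_pow_iff_dvd (z : ℤ_[p]) (k : ℕ) :
    ‖z‖ ≤ (p : ℝ) ^ (-k : ℤ) ↔ (p : ℤ_[p]) ^ k ∣ z := by
  rw [PadicInt.norm_le_pow_iff_mem_span_pow, Ideal.mem_span_singleton]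

theorem PadicInt.exists_isPadicLimit {x : ℕ → ℤ_[p]} (hx : IsPadicCauchy p x) :
    ∃ y, IsPadicLimit p x y := by
  have hdist : ∀ k n₁ n₂ : ℕ, (p : ℤ_[p]) ^ k ∣ x n₁ - x n₂ →
      dist (x n₁) (x n₂) ≤ (p : ℝ) ^ (-k : ℤ) :=
    fun k n₁ n₂ h => by rw [dist_eq_norm, PadicInt.norm_le_pow_iff_dvd]; exact h
  have hcauchy : CauchySeq x := by
    refine Metric.cauchySeq_iff.2 fun ε hε => ?_
    have hp : (1 : ℝ) < p := mod_cast (Fact.out : p.Prime).one_lt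
    obtain ⟨k, hk⟩ := exists_pow_lt_of_lt_one hε (inv_lt_one_of_one_lt₀ hp)
    obtain ⟨N, hN⟩ := hx k
    refine ⟨N, fun n₁ h₁ n₂ h₂ => (hdist k n₁ n₂ (hN n₁ n₂ h₁ h₂)).trans_lt ?_⟩
    rwa [zpow_neg, zpow_natCast, ← inv_pow]
  obtain ⟨y, hy⟩ := cauchySeq_tendsto_of_complete hcauchy
  refine ⟨y, fun k => ?_⟩
  obtain ⟨N, hN⟩ := hx k
  refine ⟨N, fun n hn => ?_⟩
  have hmem : y ∈ Metric.closedBall (x n) ((p : ℝ) ^ (-k : ℤ)) :=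
    Metric.isClosed_closedBall.mem_of_tendsto hy <| Filter.eventually_atTop.2
      ⟨N, fun n₂ h₂ => hdist k n₂ n (hN n₂ n h₂ hn)⟩
  rw [Metric.mem_closedBall, dist_comm, dist_eq_norm, PadicInt.norm_le_pow_iff_dvd] at hmem
  exact hmem

end PadicConvergence

section DivPow

variable {p : ℕ} {c : ℕ → ℕ} (hc : ∀ n₁ n₂, n₁ ≤ n₂ → ∃ r, c n₂ = c n₁ + p ^ n₁ * r)
include hc

theorem mod_pow_eq_of_le {m n : ℕ} (h : m ≤ n) : c n % p ^ m = c m % p ^ m := by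
  obtain ⟨r, hr⟩ := hc m n h
  rw [hr, Nat.add_mul_mod_self_left]

theorem isPadicCauchy_div_pow [Fact p.Prime] (m : ℕ) :
    IsPadicCauchy p (fun n => ((c n / p ^ m : ℕ) : ℤ_[p])) := by
  intro k
  refine ⟨m + k, fun n₁ n₂ h₁ h₂ => ?_⟩
  wlog h : n₂ ≤ n₁ generalizing n₁ n₂
  · obtain ⟨B, hB⟩ := this n₂ n₁ h₂ h₁ (le_of_not_ge h)
    exact ⟨-B, by rw [← neg_sub, hB, smul_neg]⟩
  obtain ⟨r, hr⟩ := hc n₂ n₁ h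
  have hsplit : p ^ n₂ * r = p ^ m * (p ^ (n₂ - m) * r) := by
    rw [← mul_assoc, ← pow_add, Nat.add_sub_cancel' (by omega)]
  have hpos : 0 < p ^ m := pow_pos (Fact.out : p.Prime).pos m
  show (p : ℤ_[p]) ^ k ∣ ((c n₁ / p ^ m : ℕ) : ℤ_[p]) - ((c n₂ / p ^ m : ℕ) : ℤ_[p])
  rw [hr, hsplit, Nat.add_mul_div_left _ _ hpos]
  push_cast
  rw [add_sub_cancel_left]
  exact (pow_dvd_pow _ (by omega)).mul_right _

end DivPow

theorem stmt_11_general (ℓ : ℕ) [Fact ℓ.Prime] (a : ℕ → ℕ)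
    (c : ℕ → ℕ) (hc : ∀ n, c n = ∑ ν ∈ Finset.range (n+1), a ν * ℓ ^ ν)
    (A : (m n : ℕ) → MonoidAlgebra ℤ_[ℓ] (Multiplicative (ZMod (ℓ ^ m))))
    (hA : ∀ m n, A m n = ∑ i ∈ Finset.range (c n),
      MonoidAlgebra.single (Multiplicative.ofAdd ((i : ZMod (ℓ ^ m)))) 1) :
    (∀ m k : ℕ, ∃ N, ∀ n₁ n₂, N ≤ n₁ → N ≤ n₂ →
      ∃ B, A m n₁ - A m n₂ = ((ℓ : ℤ_[ℓ]) ^ k) • B) ∧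
    (∀ m : ℕ, ∃ L, ∀ k : ℕ, ∃ N, ∀ n, N ≤ n →
      ∃ B, A m n - L = ((ℓ : ℤ_[ℓ]) ^ k) • B) := by
  have : NeZero ℓ := ⟨(Fact.out : ℓ.Prime).ne_zero⟩
  have hc_congr : ∀ n₁ n₂, n₁ ≤ n₂ → ∃ r, c n₂ = c n₁ + ℓ ^ n₁ * r := fun n₁ n₂ h => by
    obtain ⟨r, hr⟩ := exists_sum_range_mul_pow_eq_add a ℓ (Nat.succ_le_succ h)
    exact ⟨ℓ * r, by rw [hc, hc, hr, pow_succ, mul_assoc]⟩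
  have hrepr : ∀ m n, m ≤ n → A m n =
      ∑ i ∈ range (c m % ℓ ^ m), MonoidAlgebra.single (Multiplicative.ofAdd (i : ZMod (ℓ ^ m))) 1
        + ((c n / ℓ ^ m : ℕ) : ℤ_[ℓ]) •
          ∑ x : ZMod (ℓ ^ m), MonoidAlgebra.single (Multiplicative.ofAdd x) (1 : ℤ_[ℓ]) :=
    fun m n h => by
      rw [hA, ZMod.sum_range_eq_mod_add_div
        (fun x => MonoidAlgebra.single (Multiplicative.ofAdd x) 1), mod_pow_eq_of_le hc_congr h,
        Nat.cast_smul_eq_nsmul]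
  refine ⟨fun m => (isPadicCauchy_div_pow hc_congr m).of_eq_add_smul (hrepr m), fun m => ?_⟩
  obtain ⟨y, hy⟩ := PadicInt.exists_isPadicLimit (isPadicCauchy_div_pow hc_congr m)
  exact ⟨_, hy.of_eq_add_smul (hrepr m)⟩

/-- Let `α = Σ a_ν ℓ^ν ∈ ℤ_ℓ` with digits `0 ≤ a_ν < ℓ` and let
`A_n = 1 + t + ⋯ + t^{c_n - 1}` with `c_n = Σ_{ν≤n} a_ν ℓ^ν`, viewed in the completed group
algebra `ℤ_ℓ[[ℤ_ℓ]] = lim_m ℤ_ℓ[ℤ/ℓ^m]`.  Then `(A_n)` is Cauchy and converges.  An element of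
the inverse limit is a compatible family of elements of the levels `ℤ_ℓ[ℤ/ℓ^m ℤ]`, each
carrying the `ℓ`-adic topology on coefficients; so Cauchyness/convergence is expressed
levelwise: at each level `m` and each precision `ℓ^k`, the images of `A_{n₁} - A_{n₂}` are
eventually divisible by `ℓ^k`, and there is a levelwise limit `L m`. -/
theorem stmt_11 (ℓ : ℕ) [Fact ℓ.Prime] (a : ℕ → ℕ) (ha : ∀ ν, a ν < ℓ)
    (c : ℕ → ℕ) (hc : ∀ n, c n = ∑ ν ∈ Finset.range (n+1), a ν * ℓ ^ ν)
    (A : (m n : ℕ) → MonoidAlgebra ℤ_[ℓ] (Multiplicative (ZMod (ℓ ^ m))))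
    (hA : ∀ m n, A m n = ∑ i ∈ Finset.range (c n),
      MonoidAlgebra.single (Multiplicative.ofAdd ((i : ZMod (ℓ ^ m)))) 1) :
    (∀ m k : ℕ, ∃ N, ∀ n₁ n₂, N ≤ n₁ → N ≤ n₂ →
      ∃ B, A m n₁ - A m n₂ = ((ℓ : ℤ_[ℓ]) ^ k) • B) ∧
    (∀ m : ℕ, ∃ L, ∀ k : ℕ, ∃ N, ∀ n, N ≤ n →
      ∃ B, A m n - L = ((ℓ : ℤ_[ℓ]) ^ k) • B) :=
  stmt_11_general ℓ a c hc A hA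
end
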